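/- For a rooted tree R of order n isomorphic to a unicentroidal free tree rooted at its centroid, every child of the root has weight at most floor((n-1)/2). Consequently β restricts to a bijection from A(n, floor((n-1)/2)) = ∪_{q=1}^{floor((n-1)/2)} A_q(n) onto the set F_U(n) of free weight sequences of unicentroidal free trees of order n. -/

import Mathlib

inductive OTree : Type
  | node : List OTree → OTree

namespace OTree

def size : OTree → ℕ
  | .node cs => (cs.attach.map (fun c => size c.1)).sum + 1
decreasing_by simp only [OTree.node.sizeOf_spec]; have := List.sizeOf_lt_of_mem c.2; omega

def ws : OTree → List ℕ
  | .node cs => size (.node cs) :: (cs.attach.map (fun c => ws c.1)).flatten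
decreasing_by simp only [OTree.node.sizeOf_spec]; have := List.sizeOf_lt_of_mem c.2; omega

def preorder : OTree → List OTree
  | .node cs => .node cs :: (cs.attach.map (fun c => preorder c.1)).flatten
decreasing_by simp only [OTree.node.sizeOf_spec]; have := List.sizeOf_lt_of_mem c.2; omega

lemma size_pos (R : OTree) : 0 < R.size := by
  cases R with | node cs => simp only [OTree.size]; omega

end OTree

inductive RIso : OTree → OTree → Prop
  | node {cs cs' : List OTree} (l : List OTree) (hp : l.Perm cs')
      (hlen : cs.length = l.length)
      (h : ∀ (i : ℕ) (h1 : i < cs.length) (h2 : i < l.length), RIso cs[i] l[i]) :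
      RIso (.node cs) (.node cs')

inductive Canonical : OTree → Prop
  | node {cs : List OTree}
      (hchain : List.Chain' (fun u v => OTree.ws v ≤ OTree.ws u) cs)
      (h : ∀ c ∈ cs, Canonical c) : Canonical (.node cs)

def Centroidal {V : Type} [Fintype V] (G : SimpleGraph V) (u : V) : Prop :=
  ∀ v : ↥{x : V | x ≠ u},
    2 * Nat.card {w : ↥{x : V | x ≠ u} | (G.induce {x : V | x ≠ u}).Reachable v w}
      ≤ Fintype.card V

def IsParent (w : List ℕ) (i j : ℕ) : Prop :=
  i < j ∧ j < i + w.getD i 0 ∧ ∀ k, i < k → k < j → ¬ (j < k + w.getD k 0)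

def graphOf (R : OTree) : SimpleGraph (Fin R.size) :=
  SimpleGraph.fromRel (fun i j => IsParent R.ws i.1 j.1)

def rootIdx (R : OTree) : Fin R.size := ⟨0, R.size_pos⟩

def B (n : ℕ) : Set (List ℕ) := {s | ∃ R : OTree, Canonical R ∧ R.size = n ∧ R.ws = s}

def Succeq (s t : List ℕ) : Prop := t ≤ s ∨ s <+: t

def A (q n : ℕ) : Set (List ℕ × List ℕ) :=
  {p | p.1 ∈ B q ∧ p.2 ∈ B (n - q) ∧ Succeq p.1 p.2.tail}

def FwsUni {V : Type} [Fintype V] (G : SimpleGraph V) (s : List ℕ) : Prop :=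
  ∃ R : OTree, Canonical R ∧ R.ws = s ∧
    ∃ f : graphOf R ≃g G, Centroidal G (f (rootIdx R))

def FwsBi {V : Type} [Fintype V] (G : SimpleGraph V) (s : List ℕ) : Prop :=
  ∃ u v, u ≠ v ∧ G.Adj u v ∧ Centroidal G u ∧ Centroidal G v ∧
  ∃ A B : OTree, Canonical A ∧ Canonical B ∧ B.ws ≤ A.ws ∧ s = A.ws ++ B.ws ∧
  ∃ (fA : graphOf A ≃g (G.deleteEdges {s(u,v)}).induce
        {x | (G.deleteEdges {s(u,v)}).Reachable u x})
    (fB : graphOf B ≃g (G.deleteEdges {s(u,v)}).induce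
        {x | (G.deleteEdges {s(u,v)}).Reachable v x}),
    (fA (rootIdx A)).1 = u ∧ (fB (rootIdx B)).1 = v

def FU (n : ℕ) : Set (List ℕ) :=
  {s | ∃ G : SimpleGraph (Fin n), G.IsTree ∧ (∃! u, Centroidal G u) ∧ FwsUni G s}

/-!
A rooted tree is encoded by its weight sequence `w`: the subtree at position `i` occupies the
positions `[i, i + w[i])`, and these intervals are laminar. Removing a vertex `u` from the tree
leaves the subtrees of the children of `u` and the complement of the subtree of `u`, so `u` is a
centroid iff each of these pieces has at most `n / 2` vertices. Hence the root is the unique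
centroid iff every branch at the root has fewer than `n / 2` vertices: a branch of exactly `n / 2`
vertices makes its own root a second centroid, while any other vertex lies in a branch of fewer
than `n / 2` vertices and so leaves more than `n / 2` on the side of the root.

The map `β` grafts the tree of `a` onto the root of the tree of `b` as its first branch. The
result is canonical iff the first branch of `b` is at most `a`, which is the condition `a ≽ b^#`
because a weight sequence is never a proper prefix of another one (its head is its length).
-/

theorem List.eq_of_isPrefix_of_head?_eq_length {u v : List ℕ} (h : u <+: v)
    (hu : u.head? = some u.length) (hv : v.head? = some v.length) : u = v := by
  obtain ⟨r, rfl⟩ := h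
  rcases u with _ | ⟨x, u⟩
  · simp at hu
  · simp only [List.cons_append, List.head?_cons, Option.some.injEq, List.length_cons,
      List.length_append] at hu hv
    simp [List.length_eq_zero_iff.mp (by omega : r.length = 0)]

theorem List.isPrefix_or_append_lt_of_lt {u v : List ℕ} (r : List ℕ) (h : u < v) :
    u <+: v ∨ u ++ r < v := by
  induction h with
  | nil => exact .inl List.nil_prefix
  | cons _ ih => exact ih.imp (fun hp => List.cons_prefix_cons.mpr ⟨rfl, hp⟩) List.Lex.cons
  | rel hab => exact .inr (List.Lex.rel hab)

theorem succeq_append_iff {a d : List ℕ} (r : List ℕ) (ha : a.head? = some a.length)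
    (hd : d.head? = some d.length) : Succeq a (d ++ r) ↔ d ≤ a := by
  constructor
  · rintro (h | h)
    · exact not_lt.mp fun had => (lt_of_lt_of_le (List.Lex.append_right _ r had) h).false
    · rcases le_total a.length d.length with hl | hl
      · exact (List.eq_of_isPrefix_of_head?_eq_length
          (List.prefix_of_prefix_length_le h (List.prefix_append d r) hl) ha hd) ▸ le_rfl
      · exact (List.eq_of_isPrefix_of_head?_eq_length
          (List.prefix_of_prefix_length_le (List.prefix_append d r) h hl) hd ha) ▸ le_rfl
  · intro h
    rcases h.lt_or_eq with hlt | rfl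
    · rcases List.isPrefix_or_append_lt_of_lt r hlt with hp | hlt'
      · exact absurd hlt (List.eq_of_isPrefix_of_head?_eq_length hp hd ha ▸ lt_irrefl d)
      · exact .inl hlt'.le
    · exact .inr (List.prefix_append d r)

namespace SimpleGraph

variable {V : Type*} {G : SimpleGraph V}

theorem isAcyclic_of_lt_adj_unique [LinearOrder V]
    (h : ∀ ⦃x y z⦄, G.Adj x z → G.Adj y z → x < z → y < z → x = y) : G.IsAcyclic := by
  classical
  intro v c hc
  obtain ⟨m, hm, hmax⟩ := c.support.toFinset.exists_max_image id ⟨v, by simp⟩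
  simp only [List.mem_toFinset, id] at hm hmax
  have hc' := hc.rotate hm
  have hlt : ∀ x ∈ (c.rotate m hm).support, G.Adj x m → x < m := fun x hx hadj =>
    lt_of_le_of_ne (hmax x ((Walk.mem_support_rotate_iff _ _ _).mp hx)) hadj.ne
  have hnil := hc'.not_nil
  exact hc'.snd_ne_penultimate <| h (Walk.adj_snd hnil).symm (Walk.adj_penultimate hnil)
    (hlt _ (Walk.getVert_mem_support _ _) (Walk.adj_snd hnil).symm)
    (hlt _ (Walk.getVert_mem_support _ _) (Walk.adj_penultimate hnil))

theorem reachable_of_exists_lt_adj [LinearOrder V] [WellFoundedLT V] {P : V → Prop} {b : V}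
    (h : ∀ x, P x → x ≠ b → ∃ y < x, P y ∧ G.Adj y x) {x : V} (hx : P x) :
    G.Reachable b x := by
  induction x using WellFoundedLT.induction with
  | _ x ih =>
    by_cases hxb : x = b
    · subst hxb; exact Reachable.refl x
    · obtain ⟨y, hyx, hy, hadj⟩ := h x hx hxb
      exact (ih y hyx hy).trans hadj.reachable

end SimpleGraph

noncomputable def componentCard {V : Type} (G : SimpleGraph V) (u : V) (v : ↥{x : V | x ≠ u}) :
    ℕ :=
  Nat.card {w : ↥{x : V | x ≠ u} | (G.induce {x : V | x ≠ u}).Reachable v w}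

theorem centroidal_iff {V : Type} [Fintype V] {G : SimpleGraph V} {u : V} :
    Centroidal G u ↔ ∀ v, 2 * componentCard G u v ≤ Fintype.card V :=
  Iff.rfl

section FinComponents

variable {m : ℕ} {G : SimpleGraph (Fin m)} {u : Fin m}

theorem componentCard_le (F : Finset ℕ) {v : ↥{x : Fin m | x ≠ u}} (hv : v.1.1 ∈ F)
    (hF : ∀ x y, G.Adj x y → x ≠ u → y ≠ u → x.1 ∈ F → y.1 ∈ F) :
    componentCard G u v ≤ (F.erase u).card := by
  have hwalk : ∀ {a z}, (G.induce {x | x ≠ u}).Walk a z → a.1.1 ∈ F → z.1.1 ∈ F := by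
    intro a z p
    induction p with
    | nil => exact id
    | @cons x y _ hadj _ ih =>
      exact fun hx => ih (hF _ _ (SimpleGraph.comap_adj.mp hadj) x.2 y.2 hx)
  have hmem : ∀ z, (G.induce {x | x ≠ u}).Reachable v z → z.1.1 ∈ F :=
    fun z ⟨p⟩ => hwalk p hv
  rw [componentCard, ← Nat.card_eq_finsetCard]
  refine Nat.card_le_card_of_injective (fun z => ⟨z.1.1.1, Finset.mem_erase.mpr
    ⟨fun h => z.1.2 (Fin.ext h), hmem z.1 z.2⟩⟩) fun z₁ z₂ h => ?_
  simp only [Subtype.mk.injEq] at h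
  exact Subtype.ext (Subtype.ext (Fin.ext h))

theorem card_le_componentCard (F : Finset ℕ) (b : ↥{x : Fin m | x ≠ u})
    (hFm : ∀ k ∈ F, k < m) (hFu : u.1 ∉ F)
    (hdesc : ∀ x : Fin m, x.1 ∈ F → x ≠ b → ∃ y < x, y.1 ∈ F ∧ G.Adj y x) :
    F.card ≤ componentCard G u b := by
  have hne : ∀ k (hk : k ∈ F), (⟨k, hFm k hk⟩ : Fin m) ≠ u := fun k hk h => hFu (h ▸ hk)
  have hreach : ∀ x : ↥{x : Fin m | x ≠ u}, x.1.1 ∈ F →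
      (G.induce {x | x ≠ u}).Reachable b x :=
    fun x hx => SimpleGraph.reachable_of_exists_lt_adj (P := fun x => x.1.1 ∈ F)
      (fun x hx hxb => by
        obtain ⟨y, hyx, hy, hadj⟩ := hdesc x.1 hx fun h => hxb (Subtype.ext h)
        exact ⟨⟨y, fun h => hFu (h ▸ hy)⟩, hyx, hy, SimpleGraph.comap_adj.mpr hadj⟩) hx
  rw [componentCard, ← Nat.card_eq_finsetCard]
  refine Nat.card_le_card_of_injective
    (fun k => ⟨⟨⟨k.1, hFm k.1 k.2⟩, hne k.1 k.2⟩, hreach _ k.2⟩) fun k₁ k₂ h => ?_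
  simp only [Subtype.mk.injEq, Fin.mk.injEq] at h
  exact Subtype.ext h

end FinComponents

theorem Centroidal.map {V V' : Type} [Fintype V] [Fintype V'] {G : SimpleGraph V}
    {G' : SimpleGraph V'} (e : G ≃g G') {u : V} (h : Centroidal G u) : Centroidal G' (e u) := by
  intro v'
  have hF : ∀ x : ↥{x : V' | x ≠ e u}, e.symm x.1 ≠ u := fun x hx =>
    x.2 (by simpa using congrArg e hx)
  let F : G'.induce {x : V' | x ≠ e u} →g G.induce {x : V | x ≠ u} :=
    { toFun x := ⟨e.symm x.1, hF x⟩
      map_rel' hpq := (SimpleGraph.Iso.map_adj_iff e.symm).mpr (SimpleGraph.comap_adj.mp hpq) }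
  have hinj : Function.Injective F := fun p q hpq =>
    Subtype.ext (e.symm.injective (congrArg Subtype.val hpq))
  have hle : componentCard G' (e u) v' ≤ componentCard G u (F v') :=
    Nat.card_le_card_of_injective (fun z => ⟨F z.1, z.2.map F⟩)
      fun z₁ z₂ hz => Subtype.ext (hinj (congrArg Subtype.val hz))
  calc 2 * componentCard G' (e u) v' ≤ 2 * componentCard G u (F v') := Nat.mul_le_mul_left 2 hle
    _ ≤ Fintype.card V := h (F v')
    _ = Fintype.card V' := Fintype.card_congr e.toEquiv

theorem existsUnique_centroidal_of_iso {V V' : Type} [Fintype V] [Fintype V']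
    {G : SimpleGraph V} {G' : SimpleGraph V'} (e : G ≃g G') (h : ∃! u, Centroidal G u) :
    ∃! u, Centroidal G' u := by
  obtain ⟨u, hu, huniq⟩ := h
  refine ⟨e u, hu.map e, fun y hy => ?_⟩
  rw [← huniq _ (hy.map e.symm), RelIso.apply_symm_apply]

namespace OTree

theorem node_induction {P : OTree → Prop} (h : ∀ cs, (∀ c ∈ cs, P c) → P (node cs)) :
    ∀ R, P R
  | node cs => h cs fun c _ => node_induction h c
decreasing_by
  simp only [OTree.node.sizeOf_spec]; have := List.sizeOf_lt_of_mem ‹c ∈ cs›; omega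

theorem size_node (cs : List OTree) : (node cs).size = (cs.map size).sum + 1 := by
  rw [size]; simp

theorem ws_node (cs : List OTree) : (node cs).ws = (node cs).size :: (cs.map ws).flatten := by
  rw [ws]; simp

theorem length_ws : ∀ R : OTree, R.ws.length = R.size :=
  node_induction fun cs ih => by
    simp only [ws_node, size_node, List.length_cons, List.length_flatten, List.map_map]
    congr 2
    exact List.map_congr_left ih

theorem ws_head? (R : OTree) : R.ws.head? = some R.size := by
  cases R; rw [ws_node]; rfl

theorem getD_ws_zero (R : OTree) : R.ws.getD 0 0 = R.size := by
  cases R; rw [ws_node]; rfl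

theorem size_node_cons (c : OTree) (cs : List OTree) :
    (node (c :: cs)).size = c.size + (node cs).size := by
  simp only [size_node, List.map_cons, List.sum_cons]; omega

theorem ws_node_cons (c : OTree) (cs : List OTree) :
    (node (c :: cs)).ws = (node (c :: cs)).size :: (c.ws ++ (node cs).ws.tail) := by
  simp [ws_node (c :: cs), ws_node cs]

theorem head?_ws_eq_length (R : OTree) : R.ws.head? = some R.ws.length := by
  rw [ws_head?, length_ws]

theorem ws_eq_cons (R : OTree) : R.ws = R.size :: R.ws.tail := by
  cases R; rw [ws_node]; rfl

theorem size_le_size_of_ws_le {R S : OTree} (h : R.ws ≤ S.ws) : R.size ≤ S.size := by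
  rw [ws_eq_cons R, ws_eq_cons S] at h
  rcases h.lt_or_eq with h | h
  · exact List.head_le_of_lt h
  · exact (List.cons_eq_cons.mp h).1.le

end OTree

structure IsNested (w : List ℕ) : Prop where
  pos : ∀ i < w.length, 0 < w.getD i 0
  le_length : ∀ i < w.length, i + w.getD i 0 ≤ w.length
  nested : ∀ i j, i < j → j < i + w.getD i 0 → j + w.getD j 0 ≤ i + w.getD i 0

namespace IsNested

theorem nil : IsNested [] :=
  ⟨by simp, by simp, fun i j hij hj => by simp at hj; omega⟩

theorem append {u v : List ℕ} (hu : IsNested u) (hv : IsNested v) : IsNested (u ++ v) := by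
  have hget : ∀ i, (u ++ v).getD i 0 =
      if i < u.length then u.getD i 0 else v.getD (i - u.length) 0 := fun i => by
    split_ifs with h
    · exact List.getD_append u v 0 i h
    · exact List.getD_append_right u v 0 i (by omega)
  refine ⟨fun i hi => ?_, fun i hi => ?_, fun i j hij hj => ?_⟩ <;>
    simp only [hget, List.length_append] at * <;> split_ifs at * with h1 <;> try omega
  · exact hu.pos i h1
  · exact hv.pos _ (by omega)
  · have := hu.le_length i h1; omega
  · have := hv.le_length (i - u.length) (by omega); omega
  · exact hu.nested i j hij hj
  · have := hu.le_length i ‹_›; omega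
  · have := hv.nested (i - u.length) (j - u.length) (by omega) (by omega); omega

theorem cons {t : List ℕ} (ht : IsNested t) : IsNested ((t.length + 1) :: t) := by
  refine ⟨fun i hi => ?_, fun i hi => ?_, fun i j hij hj => ?_⟩
  · rcases i with _ | i
    · simp
    · simpa using ht.pos i (by simpa using hi)
  · rcases i with _ | i
    · simp
    · have := ht.le_length i (by simpa using hi)
      simp only [List.getD_cons_succ, List.length_cons]
      omega
  · rcases i with _ | i <;> rcases j with _ | j
    · omega
    · simp only [List.getD_cons_zero, List.getD_cons_succ] at hj ⊢
      by_cases hjt : j < t.length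
      · have := ht.le_length j hjt; omega
      · rw [List.getD_eq_default _ _ (by omega)]; omega
    · omega
    · simp only [List.getD_cons_succ] at hj ⊢
      have := ht.nested i j (by omega) (by omega); omega

end IsNested

theorem OTree.isNested_ws : ∀ R : OTree, IsNested R.ws :=
  node_induction fun cs ih => by
    have hflat : IsNested (cs.map ws).flatten := by
      induction cs with
      | nil => exact .nil
      | cons c cs ihc =>
        simpa using (ih c (by simp)).append (ihc fun c hc => ih c (by simp [hc]))
    have hlen := length_ws (node cs)
    rw [ws_node, List.length_cons] at hlen
    rw [ws_node, ← hlen]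
    exact hflat.cons

def subtree (w : List ℕ) (a : ℕ) : Finset ℕ := Finset.Ico a (a + w.getD a 0)

theorem mem_subtree {w : List ℕ} {a j : ℕ} :
    j ∈ subtree w a ↔ a ≤ j ∧ j < a + w.getD a 0 :=
  Finset.mem_Ico

theorem card_subtree (w : List ℕ) (a : ℕ) : (subtree w a).card = w.getD a 0 := by
  simp [subtree]

section IsParent

variable {w : List ℕ} {a i j : ℕ}

theorem IsParent.unique {i' : ℕ} (h : IsParent w i j) (h' : IsParent w i' j) : i = i' := by
  rcases Nat.lt_trichotomy i i' with hlt | he | hgt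
  · exact absurd h'.2.1 (h.2.2 i' hlt h'.1)
  · exact he
  · exact absurd h.2.1 (h'.2.2 i hgt h.1)

theorem exists_isParent (hij : i < j) (hj : j < i + w.getD i 0) : ∃ p, IsParent w p j := by
  classical
  let P p := p < j ∧ j < p + w.getD p 0
  have hspec := Nat.findGreatest_spec (P := P) hij.le ⟨hij, hj⟩
  exact ⟨Nat.findGreatest P j, hspec.1, hspec.2, fun k hik hkj hjk =>
    Nat.findGreatest_is_greatest hik hkj.le ⟨hkj, hjk⟩⟩

theorem IsParent.mem_subtree_of_mem (hp : IsParent w i j) (hj : j ∈ subtree w a) (hja : j ≠ a) :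
    i ∈ subtree w a := by
  rw [mem_subtree] at *
  have := hp.1
  by_contra hi
  exact hp.2.2 a (by omega) (by omega) hj.2

theorem IsNested.subtree_subset (hw : IsNested w) (hj : j ∈ subtree w a) :
    subtree w j ⊆ subtree w a := by
  intro k hk
  rw [mem_subtree] at *
  rcases hj.1.eq_or_lt with rfl | hlt
  · exact hk
  · have := hw.nested a j hlt hj.2; omega

theorem IsNested.mem_subtree_of_isParent (hw : IsNested w) (hp : IsParent w i j)
    (hi : i ∈ subtree w a) : j ∈ subtree w a :=
  hw.subtree_subset hi (mem_subtree.mpr ⟨hp.1.le, hp.2.1⟩)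

theorem IsNested.subtree_subset_range (hw : IsNested w) (a : ℕ) :
    subtree w a ⊆ Finset.range w.length := by
  intro k hk
  rw [mem_subtree] at hk
  rw [Finset.mem_range]
  by_cases ha : a < w.length
  · have := hw.le_length a ha; omega
  · rw [List.getD_eq_default _ _ (not_lt.mp ha)] at hk; omega

theorem IsNested.getD_lt_of_isParent (hw : IsNested w) (hp : IsParent w i j) :
    w.getD j 0 < w.getD i 0 := by
  have := hw.nested i j hp.1 hp.2.1; have := hp.1; omega

theorem IsNested.exists_isParent_of_mem_subtree (hw : IsNested w) {u v : ℕ}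
    (hv : v ∈ subtree w u) (huv : u < v) : ∃ a, IsParent w u a ∧ v ∈ subtree w a := by
  induction v using Nat.strong_induction_on with
  | _ v ih =>
    have hvw := (mem_subtree.mp hv).2
    obtain ⟨p, hp⟩ := exists_isParent huv hvw
    have hup : u ≤ p := not_lt.mp fun hpu => hp.2.2 u hpu huv hvw
    rcases hup.eq_or_lt with rfl | hup
    · have hvl := Finset.mem_range.mp (hw.subtree_subset_range _ hv)
      exact ⟨v, hp, mem_subtree.mpr ⟨le_rfl, by have := hw.pos v hvl; omega⟩⟩
    · have hpv := hp.1
      obtain ⟨a, hua, hpa⟩ := ih p hpv (mem_subtree.mpr ⟨hup.le, by omega⟩) hup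
      exact ⟨a, hua, hw.mem_subtree_of_isParent hp hpa⟩

end IsParent

section GraphOf

variable {R : OTree}

theorem graphOf_adj {x y : Fin R.size} :
    (graphOf R).Adj x y ↔ IsParent R.ws x y ∨ IsParent R.ws y x := by
  rw [graphOf, SimpleGraph.fromRel_adj]
  refine ⟨And.right, fun h => ⟨fun hxy => ?_, h⟩⟩
  subst hxy
  rcases h with h | h <;> exact lt_irrefl _ h.1

theorem exists_isParent_of_ne_rootIdx {x : Fin R.size} (hx : x ≠ rootIdx R) :
    ∃ y : Fin R.size, y < x ∧ IsParent R.ws y x := by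
  have hx0 : 0 < x.1 := Nat.pos_of_ne_zero fun h => hx (Fin.ext h)
  obtain ⟨i, hi⟩ := exists_isParent hx0 (by rw [OTree.getD_ws_zero, zero_add]; exact x.2)
  exact ⟨⟨i, hi.1.trans x.2⟩, hi.1, hi⟩

theorem graphOf_isTree (R : OTree) : (graphOf R).IsTree := by
  have : Nonempty (Fin R.size) := ⟨rootIdx R⟩
  have hreach : ∀ x, (graphOf R).Reachable (rootIdx R) x := fun x =>
    SimpleGraph.reachable_of_exists_lt_adj (P := fun _ => True) (fun x _ hx => by
      obtain ⟨y, hyx, hy⟩ := exists_isParent_of_ne_rootIdx hx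
      exact ⟨y, hyx, trivial, graphOf_adj.mpr (.inl hy)⟩) trivial
  refine ⟨⟨fun x y => (hreach x).symm.trans (hreach y)⟩,
    SimpleGraph.isAcyclic_of_lt_adj_unique fun x y z hxz hyz hx hy => ?_⟩
  have parent : ∀ {x}, (graphOf R).Adj x z → x < z → IsParent R.ws x z := fun h hlt =>
    (graphOf_adj.mp h).resolve_right fun h' => absurd h'.1 (not_lt.mpr hlt.le)
  exact Fin.ext ((parent hxz hx).unique (parent hyz hy))

/-- The only edge leaving the subtree at `a` joins `a` to its parent. -/
theorem mem_subtree_iff_of_adj {u x y : Fin R.size} {a : ℕ} (hu : u.1 = a ∨ IsParent R.ws u a)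
    (hadj : (graphOf R).Adj x y) (hx : x ≠ u) (hy : y ≠ u) :
    x.1 ∈ subtree R.ws a ↔ y.1 ∈ subtree R.ws a := by
  have key : ∀ {x y : Fin R.size}, (graphOf R).Adj x y → x ≠ u → y ≠ u →
      x.1 ∈ subtree R.ws a → y.1 ∈ subtree R.ws a := by
    intro x y hadj hx hy hxa
    by_contra hya
    rcases graphOf_adj.mp hadj with hp | hp
    · exact hya ((OTree.isNested_ws R).mem_subtree_of_isParent hp hxa)
    · have hxa' : x.1 = a := by_contra fun h => hya (hp.mem_subtree_of_mem hxa h)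
      rcases hu with hu | hu
      · exact hx (Fin.ext (hxa'.trans hu.symm))
      · exact hy (Fin.ext ((hxa' ▸ hp).unique hu))
  exact ⟨key hadj hx hy, key hadj.symm hy hx⟩

theorem self_mem_subtree (x : Fin R.size) : x.1 ∈ subtree R.ws x :=
  mem_subtree.mpr ⟨le_rfl, by
    have := (OTree.isNested_ws R).pos x (by rw [OTree.length_ws]; exact x.2); omega⟩

theorem subtree_subset_range_size (a : ℕ) : subtree R.ws a ⊆ Finset.range R.size :=
  OTree.length_ws R ▸ (OTree.isNested_ws R).subtree_subset_range a

theorem card_range_sdiff_subtree (a : ℕ) :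
    (Finset.range R.size \ subtree R.ws a).card = R.size - R.ws.getD a 0 := by
  rw [Finset.card_sdiff_of_subset (subtree_subset_range_size a), Finset.card_range,
    card_subtree]

variable {u : Fin R.size}

theorem componentCard_le_getD {a : ℕ} (hp : IsParent R.ws u a) (v : ↥{x | x ≠ u})
    (hv : v.1.1 ∈ subtree R.ws a) : componentCard (graphOf R) u v ≤ R.ws.getD a 0 := by
  have hua : u.1 ∉ subtree R.ws a := fun h => absurd (mem_subtree.mp h).1 (not_le.mpr hp.1)
  calc componentCard (graphOf R) u v ≤ ((subtree R.ws a).erase u).card :=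
        componentCard_le _ hv fun x y hadj hx hy => (mem_subtree_iff_of_adj (.inr hp) hadj hx hy).mp
    _ = R.ws.getD a 0 := by rw [Finset.erase_eq_of_notMem hua, card_subtree]

theorem componentCard_le_size_sub (v : ↥{x | x ≠ u}) (hv : v.1.1 ∉ subtree R.ws u) :
    componentCard (graphOf R) u v ≤ R.size - R.ws.getD u 0 := by
  calc componentCard (graphOf R) u v ≤ ((Finset.range R.size \ subtree R.ws u).erase u).card := by
        refine componentCard_le _ (by simp [hv]) fun x y hadj hx hy hxF => ?_
        simp only [Finset.mem_sdiff, Finset.mem_range] at hxF ⊢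
        exact ⟨y.2, fun h => hxF.2 ((mem_subtree_iff_of_adj (.inl rfl) hadj hx hy).mpr h)⟩
    _ ≤ R.size - R.ws.getD u 0 := (Finset.card_erase_le).trans (card_range_sdiff_subtree _).le

theorem getD_le_componentCard (a : ↥{x | x ≠ u}) (hp : IsParent R.ws u a.1.1) :
    R.ws.getD a.1 0 ≤ componentCard (graphOf R) u a := by
  have hua : u.1 ∉ subtree R.ws a.1 := fun h => absurd (mem_subtree.mp h).1 (not_le.mpr hp.1)
  rw [← card_subtree]
  refine card_le_componentCard _ a (fun k hk => Finset.mem_range.mp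
    (subtree_subset_range_size _ hk)) hua fun x hx hxa => ?_
  obtain ⟨y, hyx, hy⟩ := exists_isParent_of_ne_rootIdx (x := x) <| Fin.ne_of_val_ne
    (show x.1 ≠ 0 by have := (mem_subtree.mp hx).1; have := hp.1; omega)
  exact ⟨y, hyx, hy.mem_subtree_of_mem hx fun h => hxa (Fin.ext h), graphOf_adj.mpr (.inl hy)⟩

theorem size_sub_le_componentCard (b : ↥{x | x ≠ u}) (hb : b.1 = rootIdx R) :
    R.size - R.ws.getD u 0 ≤ componentCard (graphOf R) u b := by
  rw [← card_range_sdiff_subtree]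
  refine card_le_componentCard _ b (fun k hk => Finset.mem_range.mp (Finset.mem_sdiff.mp hk).1)
    (fun h => (Finset.mem_sdiff.mp h).2 (self_mem_subtree u)) fun x hx hxb => ?_
  obtain ⟨y, hyx, hy⟩ := exists_isParent_of_ne_rootIdx (x := x) (hb ▸ hxb)
  simp only [Finset.mem_sdiff, Finset.mem_range] at hx ⊢
  exact ⟨y, hyx, ⟨y.2, fun h => hx.2 ((OTree.isNested_ws R).mem_subtree_of_isParent hy h)⟩,
    graphOf_adj.mpr (.inl hy)⟩

end GraphOf

theorem centroidal_graphOf_iff {R : OTree} {u : Fin R.size} :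
    Centroidal (graphOf R) u ↔
      (∀ a, IsParent R.ws u a → 2 * R.ws.getD a 0 ≤ R.size) ∧
        2 * (R.size - R.ws.getD u 0) ≤ R.size := by
  simp only [centroidal_iff, Fintype.card_fin]
  constructor
  · intro h
    refine ⟨fun a hp => ?_, ?_⟩
    · have ha : a < R.size := Finset.mem_range.mp
        (subtree_subset_range_size u (mem_subtree.mpr ⟨hp.1.le, hp.2.1⟩))
      have hau : (⟨a, ha⟩ : Fin R.size) ≠ u := fun h => (h ▸ hp.1).false
      exact (Nat.mul_le_mul_left 2 (getD_le_componentCard ⟨⟨a, ha⟩, hau⟩ hp)).trans (h _)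
    · by_cases hu : u = rootIdx R
      · rw [hu, show R.ws.getD (rootIdx R) 0 = R.size from OTree.getD_ws_zero R, Nat.sub_self]
        exact Nat.zero_le _
      · exact (Nat.mul_le_mul_left 2
          (size_sub_le_componentCard ⟨rootIdx R, Ne.symm hu⟩ rfl)).trans (h _)
  · rintro ⟨hchild, hrest⟩ v
    by_cases hv : v.1.1 ∈ subtree R.ws u
    · have huv : u.1 < v.1.1 :=
        lt_of_le_of_ne (mem_subtree.mp hv).1 fun h => v.2 (Fin.ext h.symm)
      obtain ⟨a, hp, ha⟩ := (OTree.isNested_ws R).exists_isParent_of_mem_subtree hv huv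
      exact (Nat.mul_le_mul_left 2 (componentCard_le_getD hp v ha)).trans (hchild a hp)
    · exact (Nat.mul_le_mul_left 2 (componentCard_le_size_sub v hv)).trans hrest

theorem centroidal_rootIdx_and_unique_iff (R : OTree) :
    (Centroidal (graphOf R) (rootIdx R) ∧ ∃! u, Centroidal (graphOf R) u) ↔
      ∀ a, IsParent R.ws 0 a → 2 * R.ws.getD a 0 < R.size := by
  have hw := OTree.isNested_ws R
  have hroot : R.ws.getD (rootIdx R) 0 = R.size := OTree.getD_ws_zero R
  constructor
  · rintro ⟨hc, u, -, huniq⟩ a hp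
    refine lt_of_le_of_ne ((centroidal_graphOf_iff.mp hc).1 a hp) fun heq => ?_
    have ha : a < R.size := Finset.mem_range.mp
      (subtree_subset_range_size 0 (mem_subtree.mpr ⟨hp.1.le, hp.2.1⟩))
    -- a child carrying exactly half of the vertices would be a second centroid
    have hca : Centroidal (graphOf R) ⟨a, ha⟩ := by
      refine centroidal_graphOf_iff.mpr ⟨fun b hb => ?_, ?_⟩ <;> dsimp only at *
      · have := hw.getD_lt_of_isParent hb; omega
      · omega
    have := congrArg Fin.val ((huniq _ hca).trans (huniq _ hc).symm)
    exact (ne_of_gt hp.1) this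
  · intro h
    have hc : Centroidal (graphOf R) (rootIdx R) :=
      centroidal_graphOf_iff.mpr ⟨fun a hp => (h a hp).le, by rw [hroot, Nat.sub_self]; omega⟩
    refine ⟨hc, rootIdx R, hc, fun v hv => by_contra fun hvr => ?_⟩
    have hv0 : 0 < v.1 := Nat.pos_of_ne_zero fun h0 => hvr (Fin.ext h0)
    obtain ⟨a, hp, hva⟩ := hw.exists_isParent_of_mem_subtree
      (mem_subtree.mpr ⟨Nat.zero_le _, by rw [OTree.getD_ws_zero, zero_add]; exact v.2⟩) hv0
    have hwv := Finset.card_le_card (hw.subtree_subset hva)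
    rw [card_subtree, card_subtree] at hwv
    have := (centroidal_graphOf_iff.mp hv).2
    have := h a hp
    omega

namespace OTree

variable {c : OTree} {cs : List OTree} {k : ℕ}

theorem getD_ws_node_cons_of_le (hk0 : 0 < k) (hk : k ≤ c.size) :
    (node (c :: cs)).ws.getD k 0 = c.ws.getD (k - 1) 0 := by
  obtain ⟨k, rfl⟩ := Nat.exists_eq_add_one_of_ne_zero hk0.ne'
  rw [ws_node_cons, List.getD_cons_succ, List.getD_append _ _ _ _ (by rw [length_ws]; omega),
    Nat.add_sub_cancel]

theorem getD_ws_node_cons_of_lt (hk : c.size < k) :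
    (node (c :: cs)).ws.getD k 0 = (node cs).ws.getD (k - c.size) 0 := by
  obtain ⟨k, rfl⟩ := Nat.exists_eq_add_one_of_ne_zero (Nat.zero_lt_of_lt hk).ne'
  rw [ws_node_cons, List.getD_cons_succ, List.getD_append_right _ _ _ _ (by rw [length_ws]; omega),
    length_ws, show k + 1 - c.size = (k - c.size) + 1 by omega]
  rw [ws_eq_cons (node cs), List.tail_cons, List.getD_cons_succ]

theorem getD_ws_node_cons_one : (node (c :: cs)).ws.getD 1 0 = c.size := by
  rw [getD_ws_node_cons_of_le one_pos c.size_pos, Nat.sub_self, getD_ws_zero]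

theorem isParent_ws_node_cons_zero_iff {j : ℕ} :
    IsParent (node (c :: cs)).ws 0 j ↔
      j = 1 ∨ c.size < j ∧ IsParent (node cs).ws 0 (j - c.size) := by
  have hN := size_node_cons c cs
  have hN' := (node cs).size_pos
  have hc := c.size_pos
  simp only [IsParent, getD_ws_zero, zero_add]
  constructor
  · rintro ⟨hj0, hjN, hj⟩
    by_cases hj1 : j = 1
    · exact .inl hj1
    have hjs : c.size < j := by
      by_contra hjs
      refine hj 1 one_pos (by omega) ?_
      rw [getD_ws_node_cons_one]
      omega
    refine .inr ⟨hjs, by omega, by omega, fun k hk0 hkj => ?_⟩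
    have := hj (k + c.size) (by omega) (by omega)
    rw [getD_ws_node_cons_of_lt (by omega), Nat.add_sub_cancel] at this
    omega
  · rintro (rfl | ⟨hjs, hj0, hjN, hj⟩)
    · exact ⟨one_pos, by omega, fun k hk0 hk1 => by omega⟩
    refine ⟨by omega, by omega, fun k hk0 hkj => ?_⟩
    by_cases hks : k ≤ c.size
    · have := (isNested_ws c).le_length (k - 1) (by rw [length_ws]; omega)
      rw [getD_ws_node_cons_of_le hk0 hks]
      rw [length_ws] at this
      omega
    · have := hj (k - c.size) (by omega) (by omega)
      rw [getD_ws_node_cons_of_lt (by omega)]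
      omega

theorem forall_isParent_ws_zero_iff (P : ℕ → Prop) : ∀ cs : List OTree,
    (∀ a, IsParent (node cs).ws 0 a → P ((node cs).ws.getD a 0)) ↔ ∀ c ∈ cs, P c.size
  | [] => iff_of_true (fun a ⟨ha0, ha, _⟩ => by
      rw [getD_ws_zero, size_node] at ha; simp at ha; omega) (by simp)
  | c :: cs => by
    rw [List.forall_mem_cons, ← forall_isParent_ws_zero_iff P cs]
    simp only [isParent_ws_node_cons_zero_iff]
    constructor
    · intro h
      refine ⟨getD_ws_node_cons_one (cs := cs) ▸ h 1 (.inl rfl), fun a ha => ?_⟩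
      have := h (a + c.size) (.inr ⟨by have := ha.1; omega, by rwa [Nat.add_sub_cancel]⟩)
      rwa [getD_ws_node_cons_of_lt (by have := ha.1; omega), Nat.add_sub_cancel] at this
    · rintro ⟨h1, h⟩ a (rfl | ⟨hs, ha⟩)
      · rwa [getD_ws_node_cons_one]
      · rw [getD_ws_node_cons_of_lt hs]
        exact h _ ha

theorem canonical_node_cons_iff {c : OTree} {cs : List OTree} :
    Canonical (node (c :: cs)) ↔
      Canonical c ∧ Canonical (node cs) ∧ Succeq c.ws (node cs).ws.tail := by
  have htail : (node cs).ws.tail = (cs.map ws).flatten := by rw [ws_node]; rfl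
  have hsucc : ∀ d ds, Succeq c.ws (node (d :: ds)).ws.tail ↔ d.ws ≤ c.ws := fun d ds => by
    rw [ws_node, List.tail_cons, List.map_cons, List.flatten_cons,
      succeq_append_iff _ (head?_ws_eq_length c) (head?_ws_eq_length d)]
  constructor
  · rintro ⟨hchain, hmem⟩
    refine ⟨hmem c List.mem_cons_self, .node hchain.tail fun d hd => hmem d (.tail _ hd), ?_⟩
    rcases cs with _ | ⟨d, ds⟩
    · rw [htail, List.map_nil, List.flatten_nil, ws_eq_cons c]
      exact .inl (le_of_lt List.Lex.nil)
    · exact (hsucc d ds).mpr (List.isChain_cons_cons.mp hchain).1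
  · rintro ⟨hc, ⟨hchain, hmem⟩, hcs⟩
    refine .node ?_ (List.forall_mem_cons.mpr ⟨hc, hmem⟩)
    rcases cs with _ | ⟨d, ds⟩
    · exact List.isChain_singleton c
    · exact List.isChain_cons_cons.mpr ⟨(hsucc d ds).mp hcs, hchain⟩

theorem Canonical.ws_le_of_mem {c d : OTree} {cs : List OTree} (h : Canonical (node (c :: cs)))
    (hd : d ∈ cs) : d.ws ≤ c.ws := by
  obtain ⟨hchain, -⟩ := h
  exact ((List.isChain_map ws (R := (· ≥ ·))).mpr hchain).rel_cons (List.mem_map_of_mem hd)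

end OTree

theorem centroidal_rootIdx_and_unique_iff_node (cs : List OTree) :
    (Centroidal (graphOf (.node cs)) (rootIdx (.node cs)) ∧
        ∃! u, Centroidal (graphOf (.node cs)) u) ↔
      ∀ c ∈ cs, 2 * c.size < (OTree.node cs).size :=
  (centroidal_rootIdx_and_unique_iff _).trans
    (OTree.forall_isParent_ws_zero_iff (fun k => 2 * k < (OTree.node cs).size) cs)

theorem length_eq_of_mem_B {q : ℕ} {s : List ℕ} (h : s ∈ B q) : s.length = q := by
  obtain ⟨R, -, rfl, rfl⟩ := h
  exact OTree.length_ws R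

theorem eq_cons_of_mem_B {q : ℕ} {s : List ℕ} (h : s ∈ B q) : s = q :: s.tail := by
  obtain ⟨R, -, rfl, rfl⟩ := h
  exact OTree.ws_eq_cons R

/-- `β(a, b) = n ⊕ a ⊕ b^#`, where `b^#` is `b` without its root entry. -/
def beta (n : ℕ) (p : List ℕ × List ℕ) : List ℕ := n :: (p.1 ++ p.2.tail)

open OTree

theorem mapsTo_beta (n : ℕ) :
    Set.MapsTo (beta n)
      (⋃ q ∈ Set.Icc 1 ((n - 1) / 2), A q n) (FU n) := by
  rintro ⟨a, b⟩ hp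
  simp only [Set.mem_iUnion, Set.mem_Icc, exists_prop] at hp
  obtain ⟨q, ⟨hq1, hqn⟩, ⟨c, hc, hcq, rfl⟩, ⟨⟨ds⟩, hds, hdsq, rfl⟩, hsucc⟩ := hp
  have hT : (node (c :: ds)).size = n := by rw [size_node_cons, hcq, hdsq]; omega
  have hcan : Canonical (node (c :: ds)) := canonical_node_cons_iff.mpr ⟨hc, hds, hsucc⟩
  have hcent := (centroidal_rootIdx_and_unique_iff_node (c :: ds)).mpr fun d hd => by
    rw [hT]
    rcases List.mem_cons.mp hd with rfl | hd
    · omega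
    · have := size_le_size_of_ws_le (hcan.ws_le_of_mem hd); omega
  let e := SimpleGraph.Iso.map (finCongr hT) (graphOf (node (c :: ds)))
  exact ⟨_, e.isTree_iff.mp (graphOf_isTree _), existsUnique_centroidal_of_iso e hcent.2,
    node (c :: ds), hcan, by rw [ws_node_cons, hT, beta], e, hcent.1.map e⟩

theorem injOn_beta (n : ℕ) :
    Set.InjOn (beta n) (⋃ q, A q n) := by
  rintro ⟨a₁, b₁⟩ h₁ ⟨a₂, b₂⟩ h₂ heq
  simp only [Set.mem_iUnion] at h₁ h₂
  obtain ⟨q₁, ha₁, hb₁, -⟩ := h₁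
  obtain ⟨q₂, ha₂, hb₂, -⟩ := h₂
  dsimp only at ha₁ hb₁ ha₂ hb₂
  simp only [beta, List.cons.injEq, true_and] at heq
  obtain rfl : q₁ = q₂ := by
    rw [eq_cons_of_mem_B ha₁, eq_cons_of_mem_B ha₂] at heq
    exact (List.cons_eq_cons.mp heq).1
  obtain ⟨rfl, htail⟩ := List.append_inj heq
    (by rw [length_eq_of_mem_B ha₁, length_eq_of_mem_B ha₂])
  rw [eq_cons_of_mem_B hb₁, eq_cons_of_mem_B hb₂, htail]

theorem surjOn_beta {n : ℕ} (hn : 2 ≤ n) :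
    Set.SurjOn (beta n)
      (⋃ q ∈ Set.Icc 1 ((n - 1) / 2), A q n) (FU n) := by
  rintro s ⟨G, -, hG, R, hR, rfl, f, hf⟩
  have hRn : R.size = n := by simpa using Fintype.card_congr f.toEquiv
  have hcent : Centroidal (graphOf R) (rootIdx R) ∧ ∃! u, Centroidal (graphOf R) u :=
    ⟨by simpa using hf.map f.symm, existsUnique_centroidal_of_iso f.symm hG⟩
  obtain ⟨_ | ⟨c, cs⟩⟩ := R
  · simp [size_node] at hRn; omega
  have hc := (centroidal_rootIdx_and_unique_iff_node _).mp hcent c List.mem_cons_self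
  obtain ⟨hcc, hcs, hsucc⟩ := canonical_node_cons_iff.mp hR
  have hsize := size_node_cons c cs
  refine ⟨(c.ws, (node cs).ws), Set.mem_biUnion (x := c.size) ⟨c.size_pos, by omega⟩
    ⟨⟨c, hcc, rfl, rfl⟩, ⟨node cs, hcs, by omega, rfl⟩, hsucc⟩, ?_⟩
  rw [beta, ws_node_cons, hRn]

theorem stmt16 (n : ℕ) (hn : 2 ≤ n) :
    (∀ cs : List OTree, (OTree.node cs).size = n →
      (∃! u, Centroidal (graphOf (OTree.node cs)) u) →
      Centroidal (graphOf (OTree.node cs)) (rootIdx (OTree.node cs)) →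
      ∀ c ∈ cs, c.size ≤ (n - 1) / 2) ∧
    Set.BijOn (fun p : List ℕ × List ℕ => n :: (p.1 ++ p.2.tail))
      (⋃ q ∈ Set.Icc 1 ((n - 1) / 2), A q n) (FU n) := by
  refine ⟨fun cs hsize hunique hroot c hc => ?_, mapsTo_beta n,
    (injOn_beta n).mono (Set.iUnion₂_subset_iUnion _ _), surjOn_beta hn⟩
  have := (centroidal_rootIdx_and_unique_iff_node cs).mp ⟨hroot, hunique⟩ c hc
  omega
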